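/- Let (X,d,μ) be a space of homogeneous type, let p(·), q(·) ∈ 𝒫₁(X) satisfy 1/p(x) − 1/q(x) ≡ η for a constant η ∈ [0,1), and let ω ∈ A_{p(·),q(·)}(X). Then there is a constant C depending only on p(·), q(·) and η (the paper obtains C = 16) such that for every ball B ⊆ X and every measurable subset E ⊆ B, (μ(E)/μ(B))^{1−η} ≤ C·[ω]_{A_{p(·),q(·)}} · ‖ω χ_E‖_{q(·)} / ‖ω χ_B‖_{q(·)}. -/

import Mathlib

/-!
Fix `E ⊆ B` with `μ(E) > 0` and numbers `λ₁ > ‖ωχ_E‖_{q(·)}`, `λ₂ > ‖ω⁻¹χ_E‖_{p′(·)}`. Since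
`1/q(x) + 1/p′(x) + η = 1`, Young's inequality for three factors bounds
`(ω/λ₁)(ω⁻¹/λ₂)μ(E)^{-η}` pointwise by `(ω/λ₁)^{q(x)} + (ω⁻¹/λ₂)^{p′(x)} + μ(E)⁻¹`; on `{p = 1}`
the middle factor is at most `1` by the `L^∞` part of the modular. Integrating over `E` gives
`μ(E)^{1-η} ≤ 3λ₁λ₂`, hence `μ(E)^{1-η} ≤ 3‖ωχ_E‖_{q(·)}‖ω⁻¹χ_B‖_{p′(·)}`, and the
`A_{p(·),q(·)}` condition on `B` bounds the last factor by `[ω]μ(B)^{1-η}/‖ωχ_B‖_{q(·)}`.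
So `C = 3` works.
-/

open MeasureTheory ENNReal Set Filter Topology

noncomputable section

variable {X : Type*}

/-- `d` is a quasi-metric on `X` with quasi-triangle constant `A0`. -/
def IsQuasiMetric (d : X → X → ℝ) (A0 : ℝ) : Prop :=
  1 ≤ A0 ∧ (∀ x y, 0 ≤ d x y) ∧ (∀ x y, d x y = 0 ↔ x = y) ∧
    (∀ x y, d x y = d y x) ∧ ∀ x y z, d x y ≤ A0 * (d x z + d z y)

/-- The quasi-metric ball `B(c,r)`. -/
def qball (d : X → X → ℝ) (c : X) (r : ℝ) : Set X := {y | d c y < r}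

/-- The measure `μ` is doubling (with constant `Cμ`) on quasi-metric balls:
`0 < μ(B(x,2r)) ≤ Cμ·μ(B(x,r)) < ∞`. -/
def IsDoubling [MeasurableSpace X] (d : X → X → ℝ) (μ : Measure X) (Cμ : ℝ≥0∞) : Prop :=
  1 ≤ Cμ ∧ ∀ (x : X) (r : ℝ), 0 < r →
    0 < μ (qball d x (2 * r)) ∧ μ (qball d x (2 * r)) ≤ Cμ * μ (qball d x r) ∧
      Cμ * μ (qball d x r) < ∞

/-- The Luxemburg norm `‖f‖_{p(·)}` for a variable (possibly infinite) exponent `p`. -/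
def luxNorm [MeasurableSpace X] (μ : Measure X) (p : X → ℝ≥0∞) (f : X → ℝ≥0∞) : ℝ≥0∞ :=
  sInf {lam : ℝ≥0∞ | 0 < lam ∧
    (∫⁻ x in {x | p x ≠ ∞}, (f x / lam) ^ (p x).toReal ∂μ) +
      essSup (fun x => f x / lam) (μ.restrict {x | p x = ∞}) ≤ 1}

/-- The class `𝒫₁(X)`: exponents with values in `[1,∞)` and `p₊ < ∞`. -/
def MemP1 [MeasurableSpace X] (μ : Measure X) (p : X → ℝ≥0∞) : Prop :=
  Measurable p ∧ (∀ x, 1 ≤ p x) ∧ (∀ x, p x ≠ ∞) ∧ essSup p μ < ∞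

/-- The class `𝒫(X)`: additionally `1 < p₋`. -/
def MemP [MeasurableSpace X] (μ : Measure X) (p : X → ℝ≥0∞) : Prop :=
  MemP1 μ p ∧ 1 < essInf p μ

/-- Local log-Hölder continuity `LH₀`. -/
def MemLH0 (d : X → X → ℝ) (p : X → ℝ≥0∞) : Prop :=
  ∃ C0 : ℝ, 0 ≤ C0 ∧ ∀ x y, d x y < 1 / 2 →
    |(p x).toReal - (p y).toReal| ≤ C0 / Real.log (Real.exp 1 + 1 / d x y)

/-- Log-Hölder decay at infinity `LH_∞` with base point `x0` and limit value `pinf`. -/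
def MemLHinf (d : X → X → ℝ) (x0 : X) (pinf : ℝ) (p : X → ℝ≥0∞) : Prop :=
  ∃ Cinf : ℝ, 0 ≤ Cinf ∧ ∀ x, |(p x).toReal - pinf| ≤ Cinf / Real.log (Real.exp 1 + d x x0)

/-- Global log-Hölder continuity `LH = LH₀ ∩ LH_∞`. -/
def MemLH (d : X → X → ℝ) (p : X → ℝ≥0∞) : Prop :=
  MemLH0 d p ∧ ∃ x0 pinf, MemLHinf d x0 pinf p

/-- `w` is a weight: measurable, positive and finite a.e., and locally integrable. -/
def IsWeight [MeasurableSpace X] (d : X → X → ℝ) (μ : Measure X) (w : X → ℝ≥0∞) : Prop :=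
  Measurable w ∧ (∀ᵐ x ∂μ, 0 < w x ∧ w x < ∞) ∧
    ∀ (c : X) (r : ℝ), 0 < r → ∫⁻ x in qball d c r, w x ∂μ < ∞

/-- The pointwise conjugate exponent `p′(·)`, `1/p(x) + 1/p′(x) = 1`. -/
def conjExp (p : X → ℝ≥0∞) : X → ℝ≥0∞ := fun x => if p x = ∞ then 1 else p x / (p x - 1)

/-- The `A_{p(·),q(·)}` characteristic constant
`sup_B μ(B)^{η−1} ‖w χ_B‖_{q(·)} ‖w⁻¹ χ_B‖_{p′(·)}`. -/
def ApqConst [MeasurableSpace X] (d : X → X → ℝ) (μ : Measure X) (η : ℝ)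
    (p q : X → ℝ≥0∞) (w : X → ℝ≥0∞) : ℝ≥0∞ :=
  ⨆ (c : X) (r : ℝ) (_ : 0 < r),
    μ (qball d c r) ^ (η - 1) * luxNorm μ q ((qball d c r).indicator w) *
      luxNorm μ (conjExp p) ((qball d c r).indicator fun x => (w x)⁻¹)

/-- The fractional maximal operator `M_η`. -/
def fracMax [MeasurableSpace X] (d : X → X → ℝ) (μ : Measure X) (η : ℝ)
    (f : X → ℝ≥0∞) (x : X) : ℝ≥0∞ :=
  ⨆ (c : X) (r : ℝ) (_ : 0 < r) (_ : x ∈ qball d c r),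
    μ (qball d c r) ^ (η - 1) * ∫⁻ y in qball d c r, f y ∂μ

/-- The Muckenhoupt `A₁` condition: `Mw ≤ C w` a.e. -/
def MemA1 [MeasurableSpace X] (d : X → X → ℝ) (μ : Measure X) (w : X → ℝ≥0∞) : Prop :=
  ∃ C : ℝ≥0∞, C ≠ ∞ ∧ ∀ᵐ x ∂μ, fracMax d μ 0 w x ≤ C * w x

/-- The Muckenhoupt `A_p` condition for `1 < p < ∞`. -/
def MemAp [MeasurableSpace X] (d : X → X → ℝ) (μ : Measure X) (p : ℝ)
    (w : X → ℝ≥0∞) : Prop :=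
  (⨆ (c : X) (r : ℝ) (_ : 0 < r),
    ((μ (qball d c r))⁻¹ * ∫⁻ x in qball d c r, w x ∂μ) *
      ((μ (qball d c r))⁻¹ * ∫⁻ x in qball d c r, w x ^ (-(1 / (p - 1))) ∂μ) ^ (p - 1)) ≠ ∞

/-- The class `A_∞ = ⋃_{p ≥ 1} A_p`. -/
def MemAinfty [MeasurableSpace X] (d : X → X → ℝ) (μ : Measure X) (w : X → ℝ≥0∞) : Prop :=
  MemA1 d μ w ∨ ∃ p : ℝ, 1 < p ∧ MemAp d μ p w

theorem ENNReal.rpow_mul_rpow_mul_rpow_le_add {x y z : ℝ≥0∞} {u v w : ℝ} (hu : 0 ≤ u)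
    (hv : 0 ≤ v) (hw : 0 ≤ w) (huvw : u + v + w = 1) : x ^ u * y ^ v * z ^ w ≤ x + y + z := by
  rcases eq_or_ne x ∞ with rfl | hx
  · simp
  rcases eq_or_ne y ∞ with rfl | hy
  · simp
  rcases eq_or_ne z ∞ with rfl | hz
  · simp
  lift x to NNReal using hx
  lift y to NNReal using hy
  lift z to NNReal using hz
  rw [← ENNReal.coe_rpow_of_nonneg _ hu, ← ENNReal.coe_rpow_of_nonneg _ hv,
    ← ENNReal.coe_rpow_of_nonneg _ hw]
  norm_cast
  rw [← NNReal.coe_le_coe]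
  push_cast
  refine (Real.geom_mean_le_arith_mean3_weighted hu hv hw x.coe_nonneg y.coe_nonneg
    z.coe_nonneg huvw).trans ?_
  linarith [mul_le_of_le_one_left x.coe_nonneg (by linarith : u ≤ 1),
    mul_le_of_le_one_left y.coe_nonneg (by linarith : v ≤ 1),
    mul_le_of_le_one_left z.coe_nonneg (by linarith : w ≤ 1)]

/-- At `P x = ∞` the right-hand side is `0 ^ 0 = 1`. -/
theorem le_indicator_rpow_rpow_inv {P g : X → ℝ≥0∞} {x : X} (hP : P x ≠ 0)
    (hg : P x = ∞ → g x ≤ 1) :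
    g x ≤ {x | P x ≠ ∞}.indicator (fun x => g x ^ (P x).toReal) x ^ (P x).toReal⁻¹ := by
  by_cases hx : P x = ∞
  · simpa [hx] using hg hx
  · rw [indicator_of_mem hx, ENNReal.rpow_rpow_inv (ENNReal.toReal_ne_zero.2 ⟨hP, hx⟩)]

section Modular

variable [MeasurableSpace X] {μ : Measure X} {P f g : X → ℝ≥0∞}

/-- `luxNorm μ P f` is, by definition, `sInf {λ | 0 < λ ∧ modular μ P (f / λ) ≤ 1}`. -/
def modular (μ : Measure X) (P g : X → ℝ≥0∞) : ℝ≥0∞ :=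
  (∫⁻ x in {x | P x ≠ ∞}, g x ^ (P x).toReal ∂μ) + essSup g (μ.restrict {x | P x = ∞})

theorem modular_mono (h : ∀ x, f x ≤ g x) : modular μ P f ≤ modular μ P g := by
  unfold modular
  gcongr with x
  · exact h x
  · exact essSup_mono_ae (Eventually.of_forall h)

theorem luxNorm_mono (h : ∀ x, f x ≤ g x) : luxNorm μ P f ≤ luxNorm μ P g :=
  sInf_le_sInf fun _ ⟨hlam, hmod⟩ =>
    ⟨hlam, (modular_mono fun x => ENNReal.div_le_div_right (h x) _).trans hmod⟩

theorem modular_div_le_one_of_luxNorm_lt {lam : ℝ≥0∞} (h : luxNorm μ P f < lam) :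
    modular μ P (fun x => f x / lam) ≤ 1 := by
  obtain ⟨lam', ⟨hlam', hmod⟩, hlt⟩ := sInf_lt_iff.1 h
  exact (modular_mono fun x => ENNReal.div_le_div_left hlt.le _).trans hmod

theorem lintegral_indicator_rpow_le_one (hP : Measurable P) (h : modular μ P g ≤ 1) :
    ∫⁻ x, {x | P x ≠ ∞}.indicator (fun x => g x ^ (P x).toReal) x ∂μ ≤ 1 := by
  have hfin : MeasurableSet {x | P x ≠ ∞} := hP (measurableSet_singleton ∞).compl
  rw [lintegral_indicator hfin]
  exact le_self_add.trans h

theorem ae_le_one_of_modular_le_one (hP : Measurable P) (h : modular μ P g ≤ 1) :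
    ∀ᵐ x ∂μ, P x = ∞ → g x ≤ 1 :=
  (ae_restrict_iff' ((measurableSet_singleton ∞).preimage hP)).1 <|
    (ae_le_essSup g).mono fun _ hx => hx.trans (le_add_self.trans h)

theorem setLIntegral_mul_mul_rpow_le_three {P₁ P₂ g₁ g₂ : X → ℝ≥0∞} {η : ℝ} (E : Set X)
    (hη : 0 ≤ η) (hP₁ : ∀ x, P₁ x ≠ 0) (hP₂ : ∀ x, P₂ x ≠ 0) (hP₁m : Measurable P₁)
    (hP₂m : Measurable P₂) (hg₁ : Measurable g₁)
    (hexp : ∀ x, (P₁ x).toReal⁻¹ + (P₂ x).toReal⁻¹ + η = 1)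
    (h₁ : modular μ P₁ g₁ ≤ 1) (h₂ : modular μ P₂ g₂ ≤ 1) :
    ∫⁻ x in E, g₁ x * g₂ x * (μ E)⁻¹ ^ η ∂μ ≤ 3 := by
  set G₁ := {x | P₁ x ≠ ∞}.indicator fun x => g₁ x ^ (P₁ x).toReal
  set G₂ := {x | P₂ x ≠ ∞}.indicator fun x => g₂ x ^ (P₂ x).toReal
  have hG₁ : Measurable G₁ :=
    (hg₁.pow hP₁m.ennreal_toReal).indicator (hP₁m (measurableSet_singleton ∞).compl)
  have hyoung : ∀ᵐ x ∂μ, g₁ x * g₂ x * (μ E)⁻¹ ^ η ≤ G₁ x + G₂ x + (μ E)⁻¹ := by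
    filter_upwards [ae_le_one_of_modular_le_one hP₁m h₁, ae_le_one_of_modular_le_one hP₂m h₂]
      with x hx₁ hx₂
    calc g₁ x * g₂ x * (μ E)⁻¹ ^ η
        ≤ G₁ x ^ (P₁ x).toReal⁻¹ * G₂ x ^ (P₂ x).toReal⁻¹ * (μ E)⁻¹ ^ η := by
          gcongr
          exacts [le_indicator_rpow_rpow_inv (hP₁ x) hx₁, le_indicator_rpow_rpow_inv (hP₂ x) hx₂]
      _ ≤ G₁ x + G₂ x + (μ E)⁻¹ :=
          ENNReal.rpow_mul_rpow_mul_rpow_le_add (by positivity) (by positivity) hη (hexp x)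
  calc ∫⁻ x in E, g₁ x * g₂ x * (μ E)⁻¹ ^ η ∂μ
      ≤ ∫⁻ x in E, G₁ x + G₂ x + (μ E)⁻¹ ∂μ := lintegral_mono_ae (ae_restrict_of_ae hyoung)
    _ = (∫⁻ x in E, G₁ x ∂μ) + (∫⁻ x in E, G₂ x ∂μ) + (μ E)⁻¹ * μ E := by
      rw [lintegral_add_right _ measurable_const, lintegral_add_left hG₁, setLIntegral_const]
    _ ≤ 1 + 1 + 1 := by
      gcongr
      · exact setLIntegral_le_lintegral E G₁ |>.trans (lintegral_indicator_rpow_le_one hP₁m h₁)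
      · exact setLIntegral_le_lintegral E G₂ |>.trans (lintegral_indicator_rpow_le_one hP₂m h₂)
      · exact ENNReal.inv_mul_le_one _
    _ = 3 := by norm_num

theorem min_le_of_modular_div_le_one {S : Set X} {δ lam : ℝ≥0∞} (hP : ∀ x, 1 ≤ P x)
    (hPm : Measurable P) (hS : MeasurableSet S) (hδ : ∀ x ∈ S, δ ≤ f x)
    (h : modular μ P (fun x => f x / lam) ≤ 1) : min δ (δ * μ S) ≤ lam := by
  by_contra! hlt
  have hlam : lam < δ := hlt.trans_le (min_le_left _ _)
  have hgt : ∀ x ∈ S, 1 < f x / lam := fun x hx =>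
    ((ENNReal.lt_div_iff_mul_lt (Or.inr one_ne_top) (Or.inr one_ne_zero)).2
      (by rwa [one_mul])).trans_le (ENNReal.div_le_div_right (hδ x hx) _)
  have hnull : μ (S ∩ {x | P x = ∞}) = 0 :=
    measure_mono_null (fun x hx (himp : P x = ∞ → f x / lam ≤ 1) => (hgt x hx.1).not_ge (himp hx.2))
      (ae_iff.1 (ae_le_one_of_modular_le_one hPm h))
  have hfin : MeasurableSet {x | P x ≠ ∞} := hPm (measurableSet_singleton ∞).compl
  have hint : δ / lam * μ (S ∩ {x | P x ≠ ∞}) ≤ 1 :=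
    calc δ / lam * μ (S ∩ {x | P x ≠ ∞})
        = ∫⁻ _ in S ∩ {x | P x ≠ ∞}, δ / lam ∂μ := (setLIntegral_const _ _).symm
      _ ≤ ∫⁻ x in S ∩ {x | P x ≠ ∞}, (f x / lam) ^ (P x).toReal ∂μ := by
        refine setLIntegral_mono' (hS.inter hfin) fun x hx => ?_
        have hP1 : 1 ≤ (P x).toReal := by simpa using ENNReal.toReal_mono hx.2 (hP x)
        calc δ / lam ≤ f x / lam := ENNReal.div_le_div_right (hδ x hx.1) _
          _ ≤ (f x / lam) ^ (P x).toReal := by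
            simpa using ENNReal.rpow_le_rpow_of_exponent_le (hgt x hx.1).le hP1
      _ ≤ ∫⁻ x in {x | P x ≠ ∞}, (f x / lam) ^ (P x).toReal ∂μ :=
        lintegral_mono_set inter_subset_right
      _ ≤ 1 := le_self_add.trans h
  have hμS : μ (S ∩ {x | P x ≠ ∞}) = μ S :=
    measure_inter_conull' <| measure_mono_null
      (fun x hx => show x ∈ S ∩ {x | P x = ∞} from ⟨hx.1, not_not.1 hx.2⟩) hnull
  rw [hμS, ← ENNReal.mul_div_right_comm,
    ENNReal.div_le_iff_le_mul (Or.inr one_ne_top) (Or.inr one_ne_zero), one_mul] at hint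
  exact hint.not_gt (hlt.trans_le (min_le_right _ _))

theorem luxNorm_indicator_pos {S : Set X} (hP : ∀ x, 1 ≤ P x) (hPm : Measurable P)
    (hf : Measurable f) (hf0 : ∀ᵐ x ∂μ, f x ≠ 0) (hS : MeasurableSet S) (hμS : μ S ≠ 0) :
    0 < luxNorm μ P (S.indicator f) := by
  obtain ⟨n, hn⟩ : ∃ n : ℕ, μ (S ∩ {x | (n : ℝ≥0∞)⁻¹ ≤ f x}) ≠ 0 := by
    by_contra! h
    refine hμS (measure_mono_null (fun x hxS => ?_)
      (measure_union_null (measure_iUnion_null h) (ae_iff.1 hf0)))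
    by_cases hx : f x = 0
    · exact Or.inr (not_not.2 hx)
    · obtain ⟨n, hn⟩ := ENNReal.exists_inv_nat_lt hx
      exact Or.inl (mem_iUnion.2 ⟨n, hxS, hn.le⟩)
  have hδ : (0 : ℝ≥0∞) < (n : ℝ≥0∞)⁻¹ := ENNReal.inv_pos.2 (ENNReal.natCast_ne_top n)
  refine (lt_min hδ (ENNReal.mul_pos hδ.ne' hn)).trans_le (le_sInf fun lam ⟨_, hmod⟩ => ?_)
  refine min_le_of_modular_div_le_one hP hPm (hS.inter (measurableSet_le measurable_const hf))
    (fun x hx => ?_) hmod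
  rw [indicator_of_mem hx.1]
  exact hx.2

end Modular

theorem one_le_conjExp {p : X → ℝ≥0∞} (hp : ∀ x, 1 ≤ p x) (x : X) : 1 ≤ conjExp p x := by
  unfold conjExp
  split_ifs with h
  · exact le_rfl
  · rw [ENNReal.le_div_iff_mul_le (Or.inr (zero_lt_one.trans_le (hp x)).ne')
      (Or.inl (ne_top_of_le_ne_top h tsub_le_self)), one_mul]
    exact tsub_le_self

theorem Measurable.conjExp [MeasurableSpace X] {p : X → ℝ≥0∞} (hp : Measurable p) :
    Measurable (conjExp p) :=
  Measurable.ite (hp (measurableSet_singleton ∞)) measurable_const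
    (hp.div (hp.sub measurable_const))

/-- This holds also at `p x = 1`, where `conjExp p x = ∞` has `toReal` equal to `0`. -/
theorem inv_toReal_conjExp {p : X → ℝ≥0∞} {x : X} (hp : 1 ≤ p x) (hpfin : p x ≠ ∞) :
    (conjExp p x).toReal⁻¹ = 1 - (p x).toReal⁻¹ := by
  have hP : 1 ≤ (p x).toReal := by simpa using ENNReal.toReal_mono hpfin hp
  rw [conjExp, if_neg hpfin, ENNReal.toReal_div, ENNReal.toReal_sub_of_le hp hpfin,
    ENNReal.toReal_one, inv_div, sub_div, div_self (zero_lt_one.trans_le hP).ne', one_div]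

theorem inv_toReal_add_inv_toReal_conjExp_add_eq_one {p q : X → ℝ≥0∞} {η : ℝ} {x : X} (hη : 0 ≤ η)
    (hp : 1 ≤ p x) (hpfin : p x ≠ ∞) (hq : q x ≠ 0)
    (hpq : (p x)⁻¹ = (q x)⁻¹ + ENNReal.ofReal η) :
    (q x).toReal⁻¹ + (conjExp p x).toReal⁻¹ + η = 1 := by
  rw [inv_toReal_conjExp hp hpfin, ← ENNReal.toReal_inv (p x), hpq,
    ENNReal.toReal_add (ENNReal.inv_ne_top.2 hq) ENNReal.ofReal_ne_top, ENNReal.toReal_inv,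
    ENNReal.toReal_ofReal hη]
  ring

theorem rpow_measure_le_three_mul_luxNorm_mul_luxNorm [MeasurableSpace X] {μ : Measure X}
    {P₁ P₂ ω : X → ℝ≥0∞} {E : Set X} {η : ℝ} (hη0 : 0 ≤ η) (hη1 : η < 1)
    (hP₁ : ∀ x, 1 ≤ P₁ x) (hP₂ : ∀ x, 1 ≤ P₂ x) (hP₁m : Measurable P₁) (hP₂m : Measurable P₂)
    (hexp : ∀ x, (P₁ x).toReal⁻¹ + (P₂ x).toReal⁻¹ + η = 1) (hω : Measurable ω)
    (hω' : ∀ᵐ x ∂μ, ω x ≠ 0 ∧ ω x ≠ ∞) (hE : MeasurableSet E) (hμE : μ E ≠ ∞) :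
    μ E ^ (1 - η) ≤
      3 * (luxNorm μ P₁ (E.indicator ω) * luxNorm μ P₂ (E.indicator fun x => (ω x)⁻¹)) := by
  rcases eq_or_ne (μ E) 0 with hμ0 | hμ0
  · simp [hμ0, ENNReal.zero_rpow_of_pos (sub_pos.2 hη1)]
  have hn₁ := luxNorm_indicator_pos hP₁ hP₁m hω (hω'.mono fun _ hx => hx.1) hE hμ0
  have hn₂ := luxNorm_indicator_pos hP₂ hP₂m hω.inv
    (hω'.mono fun _ hx => ENNReal.inv_ne_zero.2 hx.2) hE hμ0
  rw [mul_comm, ← ENNReal.div_le_iff_le_mul (Or.inl three_ne_zero) (Or.inl ofNat_ne_top)]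
  refine ENNReal.le_mul_of_forall_lt (Or.inl hn₁.ne') (Or.inr hn₂.ne') fun a ha b hb => ?_
  have ha0 : a ≠ 0 := (hn₁.trans ha).ne'
  have hb0 : b ≠ 0 := (hn₂.trans hb).ne'
  rcases eq_or_ne a ∞ with rfl | ha'
  · simp [hb0]
  rcases eq_or_ne b ∞ with rfl | hb'
  · simp [ha0]
  have hyoung := setLIntegral_mul_mul_rpow_le_three E hη0
    (fun x => (zero_lt_one.trans_le (hP₁ x)).ne') (fun x => (zero_lt_one.trans_le (hP₂ x)).ne')
    hP₁m hP₂m ((hω.indicator hE).div_const a) hexp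
    (modular_div_le_one_of_luxNorm_lt ha) (modular_div_le_one_of_luxNorm_lt hb)
  have hconst : ∀ᵐ x ∂μ, x ∈ E → E.indicator ω x / a * (E.indicator (fun x => (ω x)⁻¹) x / b)
      * (μ E)⁻¹ ^ η = (a * b)⁻¹ * (μ E)⁻¹ ^ η := by
    filter_upwards [hω'] with x ⟨hx0, hxtop⟩ hxE
    rw [indicator_of_mem hxE, indicator_of_mem hxE, div_eq_mul_inv, div_eq_mul_inv,
      ENNReal.mul_inv (Or.inl ha0) (Or.inl ha'),
      show ω x * a⁻¹ * ((ω x)⁻¹ * b⁻¹) = ω x * (ω x)⁻¹ * (a⁻¹ * b⁻¹) by ring,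
      ENNReal.mul_inv_cancel hx0 hxtop, one_mul]
  have hpow : (μ E)⁻¹ ^ η * μ E = μ E ^ (1 - η) := by
    rw [ENNReal.rpow_sub _ _ hμ0 hμE, ENNReal.rpow_one, ENNReal.inv_rpow, div_eq_mul_inv, mul_comm]
  rw [setLIntegral_congr_fun_ae hE hconst, setLIntegral_const, mul_assoc, hpow,
    ENNReal.inv_mul_le_iff (mul_ne_zero ha0 hb0) (ENNReal.mul_ne_top ha' hb')]
    at hyoung
  exact ENNReal.div_le_of_le_mul hyoung

theorem IsDoubling.measure_qball_pos [MeasurableSpace X] {d : X → X → ℝ} {μ : Measure X}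
    {Cμ : ℝ≥0∞} (h : IsDoubling d μ Cμ) (c : X) {r : ℝ} (hr : 0 < r) :
    0 < μ (qball d c r) := by
  simpa [mul_div_cancel₀] using (h.2 c (r / 2) (half_pos hr)).1

theorem IsDoubling.measure_qball_ne_top [MeasurableSpace X] {d : X → X → ℝ} {μ : Measure X}
    {Cμ : ℝ≥0∞} (h : IsDoubling d μ Cμ) (c : X) {r : ℝ} (hr : 0 < r) :
    μ (qball d c r) ≠ ∞ :=
  ((le_mul_of_one_le_left zero_le h.1).trans_lt (h.2 c r hr).2.2).ne

theorem le_ApqConst [MeasurableSpace X] {d : X → X → ℝ} {μ : Measure X} {η : ℝ}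
    {p q w : X → ℝ≥0∞} (c : X) {r : ℝ} (hr : 0 < r) :
    μ (qball d c r) ^ (η - 1) * luxNorm μ q ((qball d c r).indicator w) *
      luxNorm μ (conjExp p) ((qball d c r).indicator fun x => (w x)⁻¹) ≤
        ApqConst d μ η p q w :=
  le_iSup₂_of_le c r (le_iSup_of_le hr le_rfl)

theorem ENNReal.rpow_div_le_mul_mul_div {a b x y z A C : ℝ≥0∞} {s : ℝ} (hs : 0 < s)
    (hb0 : b ≠ 0) (hbtop : b ≠ ∞) (hxy : x ≤ y) (hA : A ≠ ∞) (ha : a ^ s ≤ C * (x * z))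
    (hb : b ^ (-s) * y * z ≤ A) : (a / b) ^ s ≤ C * A * (x / y) := by
  rcases eq_or_ne (a ^ s) 0 with h0 | h0
  · rw [ENNReal.div_rpow_of_nonneg _ _ hs.le, h0, ENNReal.zero_div]
    exact zero_le
  have hx0 : x ≠ 0 := fun h => h0 (by simpa [h] using ha)
  have hz0 : z ≠ 0 := fun h => h0 (by simpa [h] using ha)
  have hy0 : y ≠ 0 := ne_bot_of_le_ne_bot hx0 hxy
  have hytop : y ≠ ∞ := by
    rintro rfl
    rw [ENNReal.mul_top (ENNReal.rpow_pos (pos_iff_ne_zero.2 hb0) hbtop).ne',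
      ENNReal.top_mul hz0] at hb
    exact hA (top_le_iff.1 hb)
  calc (a / b) ^ s = a ^ s * b ^ (-s) := by
        rw [ENNReal.div_rpow_of_nonneg _ _ hs.le, div_eq_mul_inv, ← ENNReal.rpow_neg]
    _ ≤ C * (x * z) * b ^ (-s) := by gcongr
    _ = C * x * (b ^ (-s) * y * z) / y := by
        rw [show C * x * (b ^ (-s) * y * z) = C * (x * z) * b ^ (-s) * y by ring,
          ENNReal.mul_div_cancel_right hy0 hytop]
    _ ≤ C * x * A / y := by gcongr
    _ = C * A * (x / y) := by rw [mul_right_comm, mul_div_assoc]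

theorem statement7_general {X : Type*} [MeasurableSpace X]
    (d : X → X → ℝ) (μ : Measure X) (Cμ : ℝ≥0∞)
    (hdbl : IsDoubling d μ Cμ)
    (η : ℝ) (hη0 : 0 ≤ η) (hη1 : η < 1)
    (p q : X → ℝ≥0∞) (hp : MemP1 μ p) (hq : MemP1 μ q)
    (hpq : ∀ x, (p x)⁻¹ = (q x)⁻¹ + ENNReal.ofReal η)
    (ω : X → ℝ≥0∞) (hω : IsWeight d μ ω)
    (hA : ApqConst d μ η p q ω ≠ ∞) :
    ∃ C : ℝ≥0∞, C ≠ ∞ ∧ ∀ (c : X) (r : ℝ), 0 < r →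
      ∀ E ⊆ qball d c r, MeasurableSet E →
        (μ E / μ (qball d c r)) ^ (1 - η) ≤
          C * ApqConst d μ η p q ω *
            (luxNorm μ q (E.indicator ω) /
              luxNorm μ q ((qball d c r).indicator ω)) := by
  obtain ⟨hpm, hp1, hpfin, -⟩ := hp
  obtain ⟨hqm, hq1, -, -⟩ := hq
  obtain ⟨hωm, hωae, -⟩ := hω
  have hexp : ∀ x, (q x).toReal⁻¹ + (conjExp p x).toReal⁻¹ + η = 1 := fun x =>
    inv_toReal_add_inv_toReal_conjExp_add_eq_one hη0 (hp1 x) (hpfin x)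
      (zero_lt_one.trans_le (hq1 x)).ne' (hpq x)
  refine ⟨3, ENNReal.ofNat_ne_top, fun c r hr E hEB hE => ?_⟩
  have hind {f : X → ℝ≥0∞} (x : X) : E.indicator f x ≤ (qball d c r).indicator f x :=
    indicator_le_indicator_of_subset hEB (fun _ => zero_le) x
  have hHolder := rpow_measure_le_three_mul_luxNorm_mul_luxNorm hη0 hη1 hq1 (one_le_conjExp hp1)
    hqm hpm.conjExp hexp hωm (hωae.mono fun _ hx => ⟨hx.1.ne', hx.2.ne⟩) hE
    (measure_ne_top_of_subset hEB (hdbl.measure_qball_ne_top c hr))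
  refine ENNReal.rpow_div_le_mul_mul_div (sub_pos.2 hη1) (hdbl.measure_qball_pos c hr).ne'
    (hdbl.measure_qball_ne_top c hr) (luxNorm_mono hind) hA
    (hHolder.trans (mul_le_mul_right (mul_le_mul_right (luxNorm_mono hind) _) _)) ?_
  rw [neg_sub]
  exact le_ApqConst c hr

/-- For `ω ∈ A_{p(·),q(·)}`:
`(μ(E)/μ(B))^{1−η} ≤ C·[ω]·‖ωχ_E‖_{q(·)}/‖ωχ_B‖_{q(·)}`. -/
theorem statement7 {X : Type*} [MeasurableSpace X]
    (d : X → X → ℝ) (A0 : ℝ) (μ : Measure X) (Cμ : ℝ≥0∞)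
    (hd : IsQuasiMetric d A0)
    (hball : ∀ (c : X) (r : ℝ), MeasurableSet (qball d c r))
    (hdbl : IsDoubling d μ Cμ)
    (η : ℝ) (hη0 : 0 ≤ η) (hη1 : η < 1)
    (p q : X → ℝ≥0∞) (hp : MemP1 μ p) (hq : MemP1 μ q)
    (hpq : ∀ x, (p x)⁻¹ = (q x)⁻¹ + ENNReal.ofReal η)
    (ω : X → ℝ≥0∞) (hω : IsWeight d μ ω)
    (hA : ApqConst d μ η p q ω ≠ ∞) :
    ∃ C : ℝ≥0∞, C ≠ ∞ ∧ ∀ (c : X) (r : ℝ), 0 < r →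
      ∀ E ⊆ qball d c r, MeasurableSet E →
        (μ E / μ (qball d c r)) ^ (1 - η) ≤
          C * ApqConst d μ η p q ω *
            (luxNorm μ q (E.indicator ω) /
              luxNorm μ q ((qball d c r).indicator ω)) :=
  statement7_general d μ Cμ hdbl η hη0 hη1 p q hp hq hpq ω hω hA

end
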